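/- With a, φ, Φ, g, f, R₁ as above, and constants c = (2∫₀^{R₁} Φ(s)/φ(s) ds)^{−1} and ε = min{(2∫₀^{R₁} 1/φ(s) ds)^{−1}, c·Φ(R₁)}, the inequality 2 f''(r) + f'(r) a(r)⁺ ≤ −ε − c Φ(r) ≤ −(ε + c f(r)) holds for all 0 < r < R₁. -/

import Mathlib

/-!
The weight `φ` is an integrating factor: `φ' = -(a⁺/2) φ`, so from `f' = φ g` one gets
`2 f'' + a⁺ f' = 2 φ g'`. On `(0, R₁)` the cutoff `g` is differentiable with
`g' = -(Φ/φ)/(4 I₁) - (1/φ)/(4 I₂)`, where `I₁ = ∫₀^{R₁} Φ/φ` and `I₂ = ∫₀^{R₁} 1/φ`, hence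
`2 f'' + a⁺ f' = -c Φ - (2 I₂)⁻¹ ≤ -ε - c Φ`. The second inequality is `f ≤ Φ`, which holds
because `g ≤ 1`.
-/

open Filter MeasureTheory intervalIntegral

theorem Continuous.hasDerivAt_primitive {h : ℝ → ℝ} (hh : Continuous h) (a x : ℝ) :
    HasDerivAt (fun u => ∫ s in a..u, h s) (h x) x :=
  (hh.integral_hasStrictDerivAt a x).hasDerivAt

theorem Continuous.continuous_primitive_min {h : ℝ → ℝ} (hh : Continuous h) (a R : ℝ) :
    Continuous fun u => ∫ s in a..min u R, h s :=
  (continuous_primitive (fun _ _ => hh.intervalIntegrable _ _) a).comp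
    (continuous_id.min continuous_const)

theorem Continuous.hasDerivAt_primitive_min {h : ℝ → ℝ} (hh : Continuous h) (a : ℝ) {R r : ℝ}
    (hr : r < R) : HasDerivAt (fun u => ∫ s in a..min u R, h s) (h r) r := by
  refine (hh.hasDerivAt_primitive a r).congr_of_eventuallyEq ?_
  filter_upwards [Iio_mem_nhds hr] with u hu
  rw [min_eq_left hu.le]

theorem Continuous.hasDerivAt_exp_mul_primitive {b : ℝ → ℝ} (hb : Continuous b) (k a x : ℝ) :
    HasDerivAt (fun r => Real.exp (k * ∫ s in a..r, b s))
      (k * b x * Real.exp (k * ∫ s in a..x, b s)) x := by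
  convert ((hb.hasDerivAt_primitive a x).const_mul k).exp using 1
  ring

theorem two_mul_deriv_deriv_add_deriv_mul_eq {φ g f b : ℝ → ℝ} {r g' : ℝ}
    (hφ : HasDerivAt φ (-(1/2) * b r * φ r) r) (hf : ∀ x, HasDerivAt f (φ x * g x) x)
    (hg : HasDerivAt g g' r) :
    2 * deriv (deriv f) r + deriv f r * b r = 2 * φ r * g' := by
  have hf' : deriv f = fun x => φ x * g x := funext fun x => (hf x).deriv
  rw [hf', (hφ.fun_mul hg).deriv]
  ring

theorem integral_mul_le_integral_of_le_one {φ g : ℝ → ℝ} {a b : ℝ} (hab : a ≤ b)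
    (hφg : IntervalIntegrable (fun s => φ s * g s) volume a b)
    (hφ : IntervalIntegrable φ volume a b) (hφ0 : ∀ s ∈ Set.Icc a b, 0 ≤ φ s)
    (hg1 : ∀ s ∈ Set.Icc a b, g s ≤ 1) :
    ∫ s in a..b, φ s * g s ≤ ∫ s in a..b, φ s :=
  integral_mono_on hab hφg hφ fun s hs => mul_le_of_le_one_right (hφ0 s hs) (hg1 s hs)

/-- The function `g` of the paper, with `p = Φ/φ` and `q = 1/φ`. -/
noncomputable def cutoff (p q : ℝ → ℝ) (R u : ℝ) : ℝ :=
  1 - (1/4) * (∫ s in (0:ℝ)..min u R, p s) / (∫ s in (0:ℝ)..R, p s)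
    - (1/4) * (∫ s in (0:ℝ)..min u R, q s) / (∫ s in (0:ℝ)..R, q s)

section Cutoff

variable {p q : ℝ → ℝ} {R : ℝ}

theorem continuous_cutoff (hp : Continuous p) (hq : Continuous q) : Continuous (cutoff p q R) :=
  (continuous_const.sub ((continuous_const.mul (hp.continuous_primitive_min 0 R)).div_const _)).sub
    ((continuous_const.mul (hq.continuous_primitive_min 0 R)).div_const _)

theorem hasDerivAt_cutoff (hp : Continuous p) (hq : Continuous q) {r : ℝ} (hr : r < R) :
    HasDerivAt (cutoff p q R)
      (-(1/4) * p r / (∫ s in (0:ℝ)..R, p s) - (1/4) * q r / (∫ s in (0:ℝ)..R, q s)) r := by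
  refine (((hasDerivAt_const r (1:ℝ)).sub
    (((hp.hasDerivAt_primitive_min 0 hr).const_mul (1/4 : ℝ)).div_const _)).sub
    (((hq.hasDerivAt_primitive_min 0 hr).const_mul (1/4 : ℝ)).div_const _)).congr_deriv ?_
  ring

theorem cutoff_le_one (hp : ∀ s, 0 ≤ s → 0 ≤ p s) (hq : ∀ s, 0 ≤ s → 0 ≤ q s) (hR : 0 ≤ R)
    {u : ℝ} (hu : 0 ≤ u) : cutoff p q R u ≤ 1 := by
  have primitive_nonneg : ∀ {h : ℝ → ℝ}, (∀ s, 0 ≤ s → 0 ≤ h s) →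
      ∀ {t : ℝ}, 0 ≤ t → 0 ≤ ∫ s in (0:ℝ)..t, h s :=
    fun hh _ ht => integral_nonneg ht fun s hs => hh s hs.1
  have hmin : 0 ≤ min u R := le_min hu hR
  have h₁ := div_nonneg (mul_nonneg (by norm_num : (0:ℝ) ≤ 1/4) (primitive_nonneg hp hmin))
    (primitive_nonneg hp hR)
  have h₂ := div_nonneg (mul_nonneg (by norm_num : (0:ℝ) ≤ 1/4) (primitive_nonneg hq hmin))
    (primitive_nonneg hq hR)
  unfold cutoff
  linarith

end Cutoff

theorem f_differential_inequality_general (a φ Φ g f : ℝ → ℝ) (R₁ c ε : ℝ)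
    (ha : Continuous a)
    (hφ : ∀ r, φ r = Real.exp (-(1/2) * ∫ s in (0:ℝ)..r, max (a s) 0))
    (hΦ : ∀ r, Φ r = ∫ s in (0:ℝ)..r, φ s)
    (hg : ∀ r, g r = 1
        - (1/4) * (∫ s in (0:ℝ)..(min r R₁), Φ s / φ s) /
            (∫ s in (0:ℝ)..R₁, Φ s / φ s)
        - (1/4) * (∫ s in (0:ℝ)..(min r R₁), 1 / φ s) /
            (∫ s in (0:ℝ)..R₁, 1 / φ s))
    (hf : ∀ r, f r = ∫ s in (0:ℝ)..r, φ s * g s)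
    (hc : c = (2 * ∫ s in (0:ℝ)..R₁, Φ s / φ s)⁻¹)
    (hε : ε = min (2 * ∫ s in (0:ℝ)..R₁, 1 / φ s)⁻¹ (c * Φ R₁)) :
    ∀ r, 0 < r → r < R₁ →
      2 * deriv (deriv f) r + deriv f r * max (a r) 0 ≤ -ε - c * Φ r ∧
      -ε - c * Φ r ≤ -(ε + c * f r) := by
  intro r hr hrR
  have hφd : ∀ x, HasDerivAt φ (-(1/2) * max (a x) 0 * φ x) x := by
    rw [funext hφ]; exact (ha.max continuous_const).hasDerivAt_exp_mul_primitive _ 0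
  have hφpos : ∀ s, 0 < φ s := fun s => hφ s ▸ Real.exp_pos _
  have hφc : Continuous φ := continuous_iff_continuousAt.2 fun x => (hφd x).continuousAt
  have hΦc : Continuous Φ := by
    rw [funext hΦ]; exact continuous_primitive (fun _ _ => hφc.intervalIntegrable _ _) 0
  have hΦnn : ∀ s, 0 ≤ s → 0 ≤ Φ s := fun s hs =>
    hΦ s ▸ integral_nonneg hs fun x _ => (hφpos x).le
  have hp : Continuous fun s => Φ s / φ s := hΦc.div hφc fun s => (hφpos s).ne'
  have hq : Continuous fun s => 1 / φ s := continuous_const.div hφc fun s => (hφpos s).ne'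
  have hg_eq : g = cutoff (fun s => Φ s / φ s) (fun s => 1 / φ s) R₁ := funext hg
  have hgc : Continuous g := hg_eq ▸ continuous_cutoff hp hq
  have hfd : ∀ x, HasDerivAt f (φ x * g x) x := by
    rw [funext hf]; exact (hφc.mul hgc).hasDerivAt_primitive 0
  have hfΦ : f r ≤ Φ r := by
    rw [hf, hΦ]
    refine integral_mul_le_integral_of_le_one hr.le ((hφc.mul hgc).intervalIntegrable _ _)
      (hφc.intervalIntegrable _ _) (fun s _ => (hφpos s).le) fun s hs => ?_
    rw [hg_eq]
    exact cutoff_le_one (fun s hs => div_nonneg (hΦnn s hs) (hφpos s).le)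
      (fun s _ => div_nonneg zero_le_one (hφpos s).le) (hr.trans hrR).le hs.1
  have hc_nonneg : 0 ≤ c := hc ▸ inv_nonneg.2 (mul_nonneg zero_le_two
    (integral_nonneg (hr.trans hrR).le fun s hs => div_nonneg (hΦnn s hs.1) (hφpos s).le))
  have hε_le : ε ≤ (2 * ∫ s in (0:ℝ)..R₁, 1 / φ s)⁻¹ := hε ▸ min_le_left _ _
  have hkey : 2 * deriv (deriv f) r + deriv f r * max (a r) 0
      = -(2 * ∫ s in (0:ℝ)..R₁, 1 / φ s)⁻¹ - c * Φ r := by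
    rw [two_mul_deriv_deriv_add_deriv_mul_eq (b := fun x => max (a x) 0) (hφd r) hfd (hg_eq ▸ hasDerivAt_cutoff hp hq hrR), hc]
    field_simp [(hφpos r).ne']
    ring
  exact ⟨hkey ▸ by linarith, by nlinarith⟩

theorem f_differential_inequality (a φ Φ g f : ℝ → ℝ) (R₀ R₁ c ε : ℝ)
    (ha : Continuous a) (ha0 : 0 < a 0)
    (hlim : limsup (fun r => a r / r) atTop < 0)
    (hφ : ∀ r, φ r = Real.exp (-(1/2) * ∫ s in (0:ℝ)..r, max (a s) 0))
    (hΦ : ∀ r, Φ r = ∫ s in (0:ℝ)..r, φ s)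
    (hR₀ : R₀ = sInf {R : ℝ | 0 ≤ R ∧ ∀ r ≥ R, a r ≤ 0})
    (hR₁ : R₁ = sInf {R : ℝ | R₀ ≤ R ∧ ∀ r ≥ R, R * (R - R₀) * (a r / r) ≤ -4})
    (hg : ∀ r, g r = 1
        - (1/4) * (∫ s in (0:ℝ)..(min r R₁), Φ s / φ s) /
            (∫ s in (0:ℝ)..R₁, Φ s / φ s)
        - (1/4) * (∫ s in (0:ℝ)..(min r R₁), 1 / φ s) /
            (∫ s in (0:ℝ)..R₁, 1 / φ s))
    (hf : ∀ r, f r = ∫ s in (0:ℝ)..r, φ s * g s)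
    (hc : c = (2 * ∫ s in (0:ℝ)..R₁, Φ s / φ s)⁻¹)
    (hε : ε = min (2 * ∫ s in (0:ℝ)..R₁, 1 / φ s)⁻¹ (c * Φ R₁)) :
    ∀ r, 0 < r → r < R₁ →
      2 * deriv (deriv f) r + deriv f r * max (a r) 0 ≤ -ε - c * Φ r ∧
      -ε - c * Φ r ≤ -(ε + c * f r) :=
  f_differential_inequality_general a φ Φ g f R₁ c ε ha hφ hΦ hg hf hc hε
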